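/- arXiv:1110.0357 — 2 statements merged into one kernel-verified Lean document; each statement's English description precedes it below -/
import Mathlib

section
/- Let E be the elliptic curve over ℂ defined by y² = 4x(x²+1), and let x₀ = √2 - 1 - i·√(2(√2 - 1)). If P is a point on E with x-coordinate x₀, then 4P = (0,0). -/
/-!
On `y² = x³ + x` the tangent construction gives `x(2P) = (x² - 1)² / (4y²)`. Hence `x(2P) = -1`
exactly when `x` is a root of `(x² - 1)² + 4(x³ + x) = x⁴ + 4x³ - 2x² + 4x + 1`, which factors as
`(x² - 2(√2 - 1)x + 1)(x² + 2(√2 + 1)x + 1)`; the given `x₀` is a root of the first factor.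
A point with `x = -1` has `y² = -2 ≠ 0`, and doubling it gives `x = 0`, hence the point `(0, 0)`.
-/

open WeierstrassCurve Complex Real

/-- The elliptic curve `y² = 4x(x² + 1)` over `ℂ`, written in the standard Weierstrass form
`y′² = x³ + x` via the change of variables `y = 2y′`; a point `(x, y)` on the original curve
corresponds to the point `(x, y / 2)` on this Weierstrass model. -/
noncomputable def E : WeierstrassCurve.Affine ℂ :=
  { a₁ := 0, a₂ := 0, a₃ := 0, a₄ := 1, a₆ := 0 }

namespace E

open WeierstrassCurve.Affine

lemma equation_iff (x y : ℂ) : E.Equation x y ↔ y ^ 2 = x ^ 3 + x := by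
  rw [Affine.equation_iff]
  simp only [E]
  ring_nf

lemma negY_eq (x y : ℂ) : E.negY x y = -y := by
  simp [Affine.negY, E]

lemma nonsingular_zero_zero : E.Nonsingular 0 0 := by
  rw [Affine.nonsingular_iff, equation_iff]
  simp [E]

lemma exists_two_smul_some_eq {x y x' : ℂ} (h : E.Nonsingular x y) (hy : y ≠ 0)
    (hx' : (x ^ 2 - 1) ^ 2 = 4 * y ^ 2 * x') :
    ∃ (y' : ℂ) (h' : E.Nonsingular x' y'), 2 • Point.some _ _ h = Point.some _ _ h' := by
  have hcurve := (equation_iff x y).mp h.1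
  have hyneg : y ≠ E.negY x y := by
    rw [negY_eq]
    exact fun hc => hy (by linear_combination hc / 2)
  have hX : E.addX x x (E.slope x x y y) = x' := by
    rw [slope_of_Y_ne rfl hyneg, negY_eq]
    simp only [Affine.addX, E]
    field_simp
    linear_combination -8 * x * hcurve + hx'
  rw [two_smul, Point.add_self_of_Y_ne hyneg]
  generalize_proofs h₂
  revert h₂
  rw [hX]
  exact fun h₂ => ⟨_, h₂, rfl⟩

lemma exists_two_smul_some_eq_neg_one {x y : ℂ} (h : E.Nonsingular x y)
    (hx : x ^ 4 + 4 * x ^ 3 - 2 * x ^ 2 + 4 * x + 1 = 0) :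
    ∃ (y' : ℂ) (h' : E.Nonsingular (-1) y'), 2 • Point.some _ _ h = Point.some _ _ h' := by
  have hcurve := (equation_iff x y).mp h.1
  refine exists_two_smul_some_eq h ?_ (by linear_combination hx + 4 * hcurve)
  rintro rfl
  have hx_sq : x ^ 2 = 1 := by
    have : (x ^ 2 - 1) ^ 2 = 0 := by linear_combination hx + 4 * hcurve
    linear_combination pow_eq_zero_iff two_ne_zero |>.mp this
  have : x = 0 := by linear_combination -hcurve / 2 - x * hx_sq / 2
  simp [this] at hx_sq

lemma two_smul_some_eq_zero_zero {y : ℂ} (h : E.Nonsingular (-1) y) :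
    2 • Point.some _ _ h = Point.some _ _ nonsingular_zero_zero := by
  have hcurve := (equation_iff (-1) y).mp h.1
  obtain ⟨y', h', hdouble⟩ :=
    exists_two_smul_some_eq (x' := 0) h (fun hy => by rw [hy] at hcurve; norm_num at hcurve)
      (by norm_num)
  obtain rfl : y' = 0 := by simpa using (equation_iff 0 y').mp h'.1
  exact hdouble

end E

lemma quartic_eq_zero_of_sq {a b : ℂ} (ha : (a + 1) ^ 2 = 2) (hb : b ^ 2 = 2 * a) :
    (a - I * b) ^ 4 + 4 * (a - I * b) ^ 3 - 2 * (a - I * b) ^ 2 + 4 * (a - I * b) + 1 = 0 := by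
  set x := a - I * b
  have hquad : x ^ 2 - 2 * a * x + 1 = 0 := by
    linear_combination b ^ 2 * I_sq - hb - ha
  linear_combination (x ^ 2 + 2 * (a + 2) * x + 1) * hquad + 4 * x ^ 2 * ha

theorem stmt_5 (y : ℂ)
    (h : E.Nonsingular ((Real.sqrt 2 : ℂ) - 1 - I * Real.sqrt (2 * (Real.sqrt 2 - 1))) y) :
    ∃ h₀ : E.Nonsingular 0 0,
      4 • WeierstrassCurve.Affine.Point.some _ _ h = WeierstrassCurve.Affine.Point.some _ _ h₀ := by
  have ha : ((√2 : ℂ) - 1 + 1) ^ 2 = 2 := by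
    rw [sub_add_cancel, ← ofReal_pow, sq_sqrt zero_le_two, ofReal_ofNat]
  have hb : ((√(2 * (√2 - 1)) : ℝ) : ℂ) ^ 2 = 2 * ((√2 : ℂ) - 1) := by
    rw [← ofReal_pow, sq_sqrt (by linarith [one_lt_sqrt_two])]
    push_cast
    ring
  obtain ⟨y₂, h₂, h2P⟩ := E.exists_two_smul_some_eq_neg_one h (quartic_eq_zero_of_sq ha hb)
  refine ⟨E.nonsingular_zero_zero, ?_⟩
  rw [show (4 : ℕ) = 2 * 2 from rfl, mul_smul, h2P, E.two_smul_some_eq_zero_zero]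
end

section
/- Let E be the elliptic curve over ℂ defined by y² = 4x(x²+1) and let P be a point on E with x-coordinate x₀ = √2 - 1 - i·√(2(√2 - 1)). Then none of 2P, 4P equal O, but 8P = O; in particular E(ℂ) contains an element of order 8. -/
open WeierstrassCurve Complex Real

/-!
On `y² = x³ + x` the doubling map on `x`-coordinates is `x ↦ (x² - 1)² / (4(x³ + x))`.
It sends `-1` to `0`, and the point with `x = 0` is the `2`-torsion point `(0, 0)`, so a point
`P` with `x(2P) = -1` has order exactly `8`. The condition `x(2P) = -1` is the quartic
`x⁴ + 4x³ - 2x² + 4x + 1 = (x² - 2(√2 - 1)x + 1)(x² + 2(√2 + 1)x + 1) = 0`, and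
`x₀ = √2 - 1 - i√(2(√2 - 1))` is a root of the first factor.
-/

namespace WeierstrassCurve.Affine.Point

variable {F : Type*} [Field F] [DecidableEq F] {W : Affine F} {x y : F}

lemma exists_two_smul_some_eq_some (h : W.Nonsingular x y) (hy : y ≠ W.negY x y) :
    ∃ (y' : F) (h' : W.Nonsingular (W.addX x x (W.slope x x y y)) y'),
      2 • some _ _ h = some _ _ h' :=
  ⟨_, _, by rw [two_smul, add_self_of_Y_ne hy]⟩

lemma two_smul_some_eq_zero (h : W.Nonsingular x y) (hy : y = W.negY x y) :
    2 • some _ _ h = 0 := by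
  rw [two_smul, add_self_of_Y_eq hy]

end WeierstrassCurve.Affine.Point

open WeierstrassCurve.Affine

lemma E_negY (x y : ℂ) : E.negY x y = -y := by
  simp [E, Affine.negY]

lemma E_nonsingular_iff {x y : ℂ} : E.Nonsingular x y ↔ y ^ 2 = x ^ 3 + x := by
  have hΔ : E.Δ ≠ 0 := by
    simp [E, WeierstrassCurve.Δ, WeierstrassCurve.b₂, WeierstrassCurve.b₄,
      WeierstrassCurve.b₆, WeierstrassCurve.b₈]
  rw [← equation_iff_nonsingular_of_Δ_ne_zero hΔ, equation_iff]
  simp [E]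

lemma E_exists_two_smul_some_eq_some {x y x' : ℂ} (h : E.Nonsingular x y) (hx : x ^ 3 + x ≠ 0)
    (hx' : (x ^ 2 - 1) ^ 2 = 4 * (x ^ 3 + x) * x') :
    ∃ (y' : ℂ) (h' : E.Nonsingular x' y'), 2 • Point.some _ _ h = Point.some _ _ h' := by
  have hxy : y ^ 2 = x ^ 3 + x := E_nonsingular_iff.mp h
  have hy : y ≠ 0 := by rintro rfl; exact hx (by linear_combination -hxy)
  have hy_ne : y ≠ E.negY x y := by
    rw [E_negY]; intro hc; exact hy (by linear_combination hc / 2)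
  have haddX : E.addX x x (E.slope x x y y) = x' := by
    rw [slope_of_Y_ne rfl hy_ne, E_negY]
    simp only [addX, E]
    field_simp
    linear_combination hx' - (8 * x + 4 * x') * hxy
  exact haddX ▸ Point.exists_two_smul_some_eq_some h hy_ne

lemma E_two_smul_some_eq_zero {y : ℂ} (h : E.Nonsingular 0 y) : 2 • Point.some _ _ h = 0 := by
  have hy : y ^ 2 = 0 := by simpa using E_nonsingular_iff.mp h
  refine Point.two_smul_some_eq_zero h ?_
  rw [E_negY, pow_eq_zero_iff two_ne_zero |>.mp hy, neg_zero]

lemma E_order_eight_of_sq_sub_one_sq_eq {x y : ℂ} (h : E.Nonsingular x y) (hx : x ^ 3 + x ≠ 0)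
    (hx' : (x ^ 2 - 1) ^ 2 = -4 * (x ^ 3 + x)) :
    2 • Point.some _ _ h ≠ 0 ∧ 4 • Point.some _ _ h ≠ 0 ∧ 8 • Point.some _ _ h = 0 := by
  obtain ⟨y₂, h₂, hP₂⟩ := E_exists_two_smul_some_eq_some h hx (x' := -1) (by linear_combination hx')
  obtain ⟨y₄, h₄, hP₄⟩ := E_exists_two_smul_some_eq_some h₂ (by norm_num) (x' := 0) (by norm_num)
  have hP₄' : 4 • Point.some _ _ h = Point.some _ _ h₄ := by
    rw [show (4 : ℕ) = 2 * 2 from rfl, mul_smul, hP₂, hP₄]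
  refine ⟨hP₂ ▸ Point.some_ne_zero h₂, hP₄' ▸ Point.some_ne_zero h₄, ?_⟩
  rw [show (8 : ℕ) = 2 * 4 from rfl, mul_smul, hP₄', E_two_smul_some_eq_zero]

lemma sq_add_one_eq_of_eq_sub_I_mul {s t x : ℂ} (hs : s ^ 2 = 2) (ht : t ^ 2 = 2 * (s - 1))
    (hx : x = s - 1 - I * t) : x ^ 2 + 1 = 2 * (s - 1) * x := by
  subst hx
  linear_combination t ^ 2 * I_sq - ht - hs

lemma cube_add_self_ne_zero_of_sq_add_one_eq {K : Type*} [Field K] [CharZero K] {s x : K}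
    (hs : s ^ 2 = 2) (hx : x ^ 2 + 1 = 2 * (s - 1) * x) : x ^ 3 + x ≠ 0 := by
  have hs1 : s - 1 ≠ 0 := by
    intro h; rw [sub_eq_zero.mp h] at hs; norm_num at hs
  have hx0 : x ≠ 0 := by rintro rfl; norm_num at hx
  rw [show x ^ 3 + x = 2 * (s - 1) * x ^ 2 by linear_combination x * hx]
  exact mul_ne_zero (mul_ne_zero two_ne_zero hs1) (pow_ne_zero 2 hx0)

lemma sq_sub_one_sq_eq_of_sq_add_one_eq {R : Type*} [CommRing R] {s x : R} (hs : s ^ 2 = 2)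
    (hx : x ^ 2 + 1 = 2 * (s - 1) * x) : (x ^ 2 - 1) ^ 2 = -4 * (x ^ 3 + x) := by
  linear_combination (x ^ 2 + 1 + 2 * (s - 1) * x + 4 * x) * hx + 4 * x ^ 2 * hs

theorem stmt_17 :
    (∀ (y : ℂ)
        (h : E.Nonsingular ((Real.sqrt 2 : ℂ) - 1 - I * Real.sqrt (2 * (Real.sqrt 2 - 1))) y),
      2 • WeierstrassCurve.Affine.Point.some _ _ h ≠ 0 ∧
      4 • WeierstrassCurve.Affine.Point.some _ _ h ≠ 0 ∧
      8 • WeierstrassCurve.Affine.Point.some _ _ h = 0) ∧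
    ∃ Q : E.Point, addOrderOf Q = 8 := by
  set x₀ : ℂ := (Real.sqrt 2 : ℂ) - 1 - I * Real.sqrt (2 * (Real.sqrt 2 - 1)) with hx₀
  have hs : ((√2 : ℝ) : ℂ) ^ 2 = 2 := by
    rw [← ofReal_pow, Real.sq_sqrt zero_le_two]; norm_num
  have ht : ((√(2 * (√2 - 1)) : ℝ) : ℂ) ^ 2 = 2 * ((√2 : ℝ) - 1) := by
    rw [← ofReal_pow, Real.sq_sqrt (by linarith [Real.one_lt_sqrt_two])]; push_cast; rfl
  have hquad := sq_add_one_eq_of_eq_sub_I_mul hs ht hx₀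
  have hcube := cube_add_self_ne_zero_of_sq_add_one_eq hs hquad
  have hdouble := sq_sub_one_sq_eq_of_sq_add_one_eq hs hquad
  refine ⟨fun y h => E_order_eight_of_sq_sub_one_sq_eq h hcube hdouble, ?_⟩
  obtain ⟨y, hy⟩ := IsAlgClosed.exists_eq_mul_self (x₀ ^ 3 + x₀)
  have h : E.Nonsingular x₀ y := E_nonsingular_iff.mpr (by rw [hy, sq])
  obtain ⟨-, h₄, h₈⟩ := E_order_eight_of_sq_sub_one_sq_eq h hcube hdouble
  exact ⟨_, addOrderOf_eq_prime_pow (p := 2) (n := 2) h₄ h₈⟩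
end
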